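/- arXiv:1706.09643 — 4 statements merged into one kernel-verified Lean document; each statement's English description precedes it below -/
import Mathlib

section
/- Suppose F and G have finite and equal second moments, i.e. ∫ x² dF(x) = ∫ x² dν(x) < ∞. Then for every a > 0, sup_x [x² |F(x) − G(x)|] ≤ 4a² Δ + ∫_{|x| ≥ a} x² dν(x) + max{ sup_{x ≥ a} [x² |1 − G(x)|], sup_{x ≤ −a} [x² |G(x)|] }. -/
/-!
By the layer-cake formula, `∫_{|y|<a} y² d(ν - μ) = ∫_0^{a²} (ν - μ){√t < |y| < a} dt`, and each of
these sets is a difference of half-lines whose `(ν - μ)`-mass lies in `[-Δ, Δ]` (for the open ends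
via left limits of `F - G`), so the window `|y| < a` contributes at most `4a²Δ`. Since the second
moments agree, this moves to the tails: `∫_{|y|≥a} y² dμ ≤ ∫_{|y|≥a} y² dν + 4a²Δ`.
For `|x| ≥ a`, `x²|F(x) - G(x)|` is at most the Chebyshev bound `x² μ(|y| > |x|)` for the tail of
`F` plus the tail term of `G`. For `|x| < a` the trivial bound `a²Δ` suffices, because bounding
the half-line `(-∞, -a]` through `|G(-a)|` instead gives `∫_{|y|≥a} y² dν ≥ -3a²Δ - a²|G(-a)|`.
-/

open MeasureTheory Set Filter Topology

theorem le_biSup_of_forall_le {α β : Type*} [ConditionallyCompleteLattice β] {f : α → β}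
    {S : Set α} {B : β} (hB : ∀ y ∈ S, f y ≤ B) {y : α} (hy : y ∈ S) :
    f y ≤ ⨆ z ∈ S, f z :=
  le_ciSup₂ (f := fun z _ => f z) ⟨B, fun _ hb => by
    obtain ⟨z, hz, rfl⟩ := by simpa using hb
    exact hB z hz⟩ y hy

def sqSuperlevelIoo (a t : ℝ) : Set ℝ := {y | t < y ^ 2} ∩ Ioo (-a) a

theorem sqSuperlevelIoo_eq {t : ℝ} (ht : 0 ≤ t) (a : ℝ) :
    sqSuperlevelIoo a t = Ioo (-a) (-√t) ∪ Ioo (√t) a := by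
  ext y
  have key : t < y ^ 2 ↔ √t < |y| := by
    rw [← Real.sqrt_lt_sqrt_iff ht, Real.sqrt_sq_eq_abs]
  simp only [sqSuperlevelIoo, mem_inter_iff, mem_ofPred_eq, mem_Ioo, mem_union, key, lt_abs]
  constructor
  · rintro ⟨h | h, h1, h2⟩
    · exact Or.inr ⟨h, h2⟩
    · exact Or.inl ⟨h1, by linarith⟩
  · rintro (⟨h1, h2⟩ | ⟨h1, h2⟩)
    · exact ⟨Or.inr (by linarith), h1, by linarith [Real.sqrt_nonneg t]⟩
    · exact ⟨Or.inl h1, by linarith [Real.sqrt_nonneg t], h2⟩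

theorem abs_measureReal_sub_le {α : Type*} [MeasurableSpace α] (ν₁ ν₂ : Measure α) (s : Set α) :
    |ν₁.real s - ν₂.real s| ≤ ν₁.real s + ν₂.real s :=
  (abs_sub _ _).trans_eq <| by
    rw [abs_of_nonneg measureReal_nonneg, abs_of_nonneg measureReal_nonneg]

section FiniteMeasure

variable {m : Measure ℝ} [IsFiniteMeasure m]

theorem tendsto_measureReal_Iic_of_tendsto {u : ℕ → ℝ} {x : ℝ} (hu : Monotone u)
    (hlt : ∀ n, u n < x) (hux : Tendsto u atTop (𝓝 x)) :
    Tendsto (fun n => m.real (Iic (u n))) atTop (𝓝 (m.real (Iio x))) := by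
  have h := tendsto_measure_iUnion_atTop (μ := m) (s := fun n => Iic (u n))
    fun _ _ hij => Iic_subset_Iic.2 (hu hij)
  rw [iUnion_Iic_eq_Iio_of_lt_of_tendsto hlt hux] at h
  exact (ENNReal.tendsto_toReal (measure_ne_top m _)).comp h

theorem measureReal_sqSuperlevelIoo {t a : ℝ} (ht : 0 ≤ t) (hta : t < a ^ 2) (ha : 0 ≤ a) :
    m.real (sqSuperlevelIoo a t)
      = (m.real (Iio (-√t)) - m.real (Iic (-a))) + (m.real (Iio a) - m.real (Iic √t)) := by
  have hsa : √t < a := by simpa [Real.sqrt_sq ha] using Real.sqrt_lt_sqrt ht hta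
  have hdisj : Disjoint (Ioo (-a) (-√t)) (Ioo (√t) a) :=
    disjoint_left.2 fun y h1 h2 => by linarith [h1.2, h2.1, Real.sqrt_nonneg t]
  rw [sqSuperlevelIoo_eq ht, measureReal_union hdisj measurableSet_Ioo, ← Iio_sdiff_Iic,
    ← Iio_sdiff_Iic, measureReal_sdiff (Iic_subset_Iio.2 (by linarith)) measurableSet_Iic,
    measureReal_sdiff (Iic_subset_Iio.2 hsa) measurableSet_Iic]

theorem integrableOn_measureReal_sqSuperlevelIoo (a b : ℝ) :
    IntegrableOn (fun t => m.real (sqSuperlevelIoo a t)) (Ioo 0 b) := by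
  have hanti : Antitone fun t => m.real (sqSuperlevelIoo a t) :=
    fun _ _ h => measureReal_mono fun y hy => ⟨h.trans_lt hy.1, hy.2⟩
  exact ((hanti.antitoneOn _).integrableOn_isCompact isCompact_Icc).mono_set Ioo_subset_Icc_self

theorem setIntegral_Ioo_sq_eq_integral_measureReal (a : ℝ) :
    ∫ y in Ioo (-a) a, y ^ 2 ∂m = ∫ t in Ioo 0 (a ^ 2), m.real (sqSuperlevelIoo a t) := by
  have hint : IntegrableOn (fun y : ℝ => y ^ 2) (Ioo (-a) a) m :=
    (continuous_pow 2).integrableOn_Icc.mono_set Ioo_subset_Icc_self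
  rw [hint.integral_eq_integral_meas_lt (ae_of_all _ fun y => sq_nonneg y)]
  calc ∫ t in Ioi 0, (m.restrict (Ioo (-a) a)).real {y | t < y ^ 2}
      = ∫ t in Ioi 0, m.real (sqSuperlevelIoo a t) :=
        setIntegral_congr_fun measurableSet_Ioi fun t _ =>
          measureReal_restrict_apply (measurableSet_lt measurable_const (by fun_prop))
    _ = _ := by
      refine setIntegral_eq_of_subset_of_forall_sdiff_eq_zero measurableSet_Ioi
        Ioo_subset_Ioi_self fun t ht => ?_
      have hat : a ^ 2 ≤ t := not_lt.1 fun h => ht.2 ⟨ht.1, h⟩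
      have hempty : sqSuperlevelIoo a t = ∅ :=
        eq_empty_of_forall_notMem fun y ⟨hy, h1, h2⟩ => by
          nlinarith [show t < y ^ 2 from hy]
      simp [hempty]

theorem mul_measureReal_le_setIntegral_sq {c : ℝ} {S T : Set ℝ}
    (hm : Integrable (fun y : ℝ => y ^ 2) m) (hS : MeasurableSet S) (hST : S ⊆ T)
    (hc : ∀ y ∈ S, c ≤ y ^ 2) :
    c * m.real S ≤ ∫ y in T, y ^ 2 ∂m :=
  calc c * m.real S = ∫ _ in S, c ∂m := by rw [setIntegral_const, smul_eq_mul, mul_comm]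
    _ ≤ ∫ y in S, y ^ 2 ∂m := setIntegral_mono_on (integrableOn_const (by finiteness))
        hm.integrableOn hS hc
    _ ≤ ∫ y in T, y ^ 2 ∂m := setIntegral_mono_set hm.integrableOn
        (ae_of_all _ fun y => sq_nonneg y) hST.eventuallyLE

theorem sq_mul_abs_sub_le_of_le [IsProbabilityMeasure m] {F G : ℝ → ℝ} {a x : ℝ}
    (hF : ∀ x, F x = m.real (Iic x)) (hm : Integrable (fun y : ℝ => y ^ 2) m)
    (hx : 0 ≤ x) (hax : a ≤ x) :
    x ^ 2 * |F x - G x| ≤ ∫ y in {y | a ≤ |y|}, y ^ 2 ∂m + x ^ 2 * |1 - G x| := by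
  have hFc : 1 - F x = m.real (Ioi x) := by
    rw [hF, ← compl_Iic, probReal_compl_eq_one_sub measurableSet_Iic]
  have htail : x ^ 2 * m.real (Ioi x) ≤ ∫ y in {y | a ≤ |y|}, y ^ 2 ∂m :=
    mul_measureReal_le_setIntegral_sq hm measurableSet_Ioi
      (fun y (hy : x < y) => show a ≤ |y| by rw [abs_of_pos (by linarith)]; linarith)
      (fun y (hy : x < y) => by nlinarith)
  calc x ^ 2 * |F x - G x| = x ^ 2 * |(1 - G x) - (1 - F x)| := by ring_nf
    _ ≤ x ^ 2 * (|1 - G x| + |1 - F x|) := by gcongr; exact abs_sub _ _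
    _ = x ^ 2 * m.real (Ioi x) + x ^ 2 * |1 - G x| := by
      rw [hFc, abs_of_nonneg measureReal_nonneg]; ring
    _ ≤ _ := by linarith

theorem sq_mul_abs_sub_le_of_le_neg {F G : ℝ → ℝ} {a x : ℝ}
    (hF : ∀ x, F x = m.real (Iic x)) (hm : Integrable (fun y : ℝ => y ^ 2) m)
    (hx : x ≤ 0) (hxa : x ≤ -a) :
    x ^ 2 * |F x - G x| ≤ ∫ y in {y | a ≤ |y|}, y ^ 2 ∂m + x ^ 2 * |G x| := by
  have htail : x ^ 2 * m.real (Iic x) ≤ ∫ y in {y | a ≤ |y|}, y ^ 2 ∂m :=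
    mul_measureReal_le_setIntegral_sq hm measurableSet_Iic
      (fun y (hy : y ≤ x) => show a ≤ |y| by rw [abs_of_nonpos (by linarith)]; linarith)
      (fun y (hy : y ≤ x) => by nlinarith)
  calc x ^ 2 * |F x - G x| ≤ x ^ 2 * (|F x| + |G x|) := by gcongr; exact abs_sub _ _
    _ = x ^ 2 * m.real (Iic x) + x ^ 2 * |G x| := by
      rw [hF, abs_of_nonneg measureReal_nonneg]; ring
    _ ≤ _ := by linarith

end FiniteMeasure

theorem setIntegral_tail_sub_eq_neg {μ ν₁ ν₂ : Measure ℝ} (hμ : Integrable (fun y : ℝ => y ^ 2) μ)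
    (hν₁ : Integrable (fun y : ℝ => y ^ 2) ν₁) (hν₂ : Integrable (fun y : ℝ => y ^ 2) ν₂)
    (hmom : ∫ y, y ^ 2 ∂μ = (∫ y, y ^ 2 ∂ν₁) - ∫ y, y ^ 2 ∂ν₂) (a : ℝ) :
    (∫ y in {y | a ≤ |y|}, y ^ 2 ∂ν₁) - (∫ y in {y | a ≤ |y|}, y ^ 2 ∂ν₂)
      - ∫ y in {y | a ≤ |y|}, y ^ 2 ∂μ
      = -((∫ y in Ioo (-a) a, y ^ 2 ∂ν₁) - (∫ y in Ioo (-a) a, y ^ 2 ∂ν₂)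
        - ∫ y in Ioo (-a) a, y ^ 2 ∂μ) := by
  have hT : MeasurableSet {y : ℝ | a ≤ |y|} :=
    measurableSet_le measurable_const continuous_abs.measurable
  have hTc : {y : ℝ | a ≤ |y|}ᶜ = Ioo (-a) a := by ext y; simp [abs_lt]
  have h₀ := integral_add_compl hT hμ
  have h₁ := integral_add_compl hT hν₁
  have h₂ := integral_add_compl hT hν₂
  rw [hTc] at h₀ h₁ h₂
  linarith

section SignedDifference

variable {μ ν₁ ν₂ : Measure ℝ} [IsFiniteMeasure μ] [IsFiniteMeasure ν₁] [IsFiniteMeasure ν₂]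
  {F G : ℝ → ℝ} {Δ a : ℝ}

theorem bddAbove_range_abs_sub (hF : ∀ x, F x = μ.real (Iic x))
    (hG : ∀ x, G x = ν₁.real (Iic x) - ν₂.real (Iic x)) :
    BddAbove (range fun x => |F x - G x|) := by
  refine ⟨μ.real univ + (ν₁.real univ + ν₂.real univ), ?_⟩
  rintro _ ⟨x, rfl⟩
  have hG' : |G x| ≤ ν₁.real univ + ν₂.real univ := by
    rw [hG]
    exact (abs_measureReal_sub_le ν₁ ν₂ _).trans
      (add_le_add (measureReal_mono (subset_univ _)) (measureReal_mono (subset_univ _)))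
  have hF' : |F x| ≤ μ.real univ := by
    rw [hF, abs_of_nonneg measureReal_nonneg]
    exact measureReal_mono (subset_univ _)
  exact (abs_sub _ _).trans (add_le_add hF' hG')

theorem abs_measureReal_Iio_sub_le (hF : ∀ x, F x = μ.real (Iic x))
    (hG : ∀ x, G x = ν₁.real (Iic x) - ν₂.real (Iic x)) (hΔ : ∀ x, |F x - G x| ≤ Δ) (x : ℝ) :
    |μ.real (Iio x) - (ν₁.real (Iio x) - ν₂.real (Iio x))| ≤ Δ := by
  obtain ⟨u, hu, hlt, hux⟩ := exists_seq_strictMono_tendsto x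
  have hlim := (tendsto_measureReal_Iic_of_tendsto (m := μ) hu.monotone hlt hux).sub
    ((tendsto_measureReal_Iic_of_tendsto (m := ν₁) hu.monotone hlt hux).sub
      (tendsto_measureReal_Iic_of_tendsto (m := ν₂) hu.monotone hlt hux))
  exact le_of_tendsto' hlim.abs fun n => by simpa only [hF, hG] using hΔ (u n)

theorem measureReal_sqSuperlevelIoo_sub_le_four_mul (hF : ∀ x, F x = μ.real (Iic x))
    (hG : ∀ x, G x = ν₁.real (Iic x) - ν₂.real (Iic x)) (hΔ : ∀ x, |F x - G x| ≤ Δ)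
    (ha : 0 ≤ a) {t : ℝ} (ht : 0 ≤ t) (hta : t < a ^ 2) :
    ν₁.real (sqSuperlevelIoo a t) - ν₂.real (sqSuperlevelIoo a t)
      - μ.real (sqSuperlevelIoo a t) ≤ 4 * Δ := by
  simp only [measureReal_sqSuperlevelIoo ht hta ha]
  have h₁ := abs_le.1 (abs_measureReal_Iio_sub_le hF hG hΔ (-√t))
  have h₂ := abs_le.1 (abs_measureReal_Iio_sub_le hF hG hΔ a)
  have h₃ := abs_le.1 (hΔ √t)
  have h₄ := abs_le.1 (hΔ (-a))
  rw [hF, hG] at h₃ h₄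
  linarith [h₁.1, h₂.1, h₃.2, h₄.2]

theorem measureReal_sqSuperlevelIoo_sub_le (hF : ∀ x, F x = μ.real (Iic x))
    (hG : ∀ x, G x = ν₁.real (Iic x) - ν₂.real (Iic x)) (hΔ : ∀ x, |F x - G x| ≤ Δ)
    (ha : 0 ≤ a) {t : ℝ} (ht : 0 ≤ t) (hta : t < a ^ 2) :
    ν₁.real (sqSuperlevelIoo a t) - ν₂.real (sqSuperlevelIoo a t)
      - μ.real (sqSuperlevelIoo a t) ≤ 3 * Δ + |G (-a)| + μ.real {y | a ≤ |y|} := by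
  simp only [measureReal_sqSuperlevelIoo ht hta ha]
  have h₁ := abs_le.1 (abs_measureReal_Iio_sub_le hF hG hΔ (-√t))
  have h₂ := abs_le.1 (abs_measureReal_Iio_sub_le hF hG hΔ a)
  have h₃ := abs_le.1 (hΔ √t)
  have hGa : -(ν₁.real (Iic (-a)) - ν₂.real (Iic (-a))) ≤ |G (-a)| := by
    rw [hG]; exact neg_le_abs _
  have hμa : μ.real (Iic (-a)) ≤ μ.real {y | a ≤ |y|} :=
    measureReal_mono fun y (hy : y ≤ -a) => show a ≤ |y| from le_abs.2 (Or.inr (by linarith))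
  rw [hF, hG] at h₃
  linarith [h₁.1, h₂.1, h₃.2]

theorem setIntegral_Ioo_sq_sub_le {c : ℝ}
    (hc : ∀ t ∈ Ioo 0 (a ^ 2), ν₁.real (sqSuperlevelIoo a t) - ν₂.real (sqSuperlevelIoo a t)
      - μ.real (sqSuperlevelIoo a t) ≤ c) :
    (∫ y in Ioo (-a) a, y ^ 2 ∂ν₁) - (∫ y in Ioo (-a) a, y ^ 2 ∂ν₂)
      - ∫ y in Ioo (-a) a, y ^ 2 ∂μ ≤ a ^ 2 * c := by
  have hint (m : Measure ℝ) [IsFiniteMeasure m] :=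
    integrableOn_measureReal_sqSuperlevelIoo (m := m) a (a ^ 2)
  simp only [setIntegral_Ioo_sq_eq_integral_measureReal]
  rw [← integral_sub (hint ν₁) (hint ν₂), ← integral_sub ((hint ν₁).sub' (hint ν₂)) (hint μ)]
  calc _ ≤ ∫ _ in Ioo 0 (a ^ 2), c :=
        setIntegral_mono_on (((hint ν₁).sub' (hint ν₂)).sub' (hint μ))
          (integrableOn_const measure_Ioo_lt_top.ne) measurableSet_Ioo hc
    _ = a ^ 2 * c := by
      rw [setIntegral_const, Real.volume_real_Ioo_of_le (sq_nonneg a), smul_eq_mul, sub_zero]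

theorem setIntegral_tail_le (hF : ∀ x, F x = μ.real (Iic x))
    (hG : ∀ x, G x = ν₁.real (Iic x) - ν₂.real (Iic x)) (hΔ : ∀ x, |F x - G x| ≤ Δ)
    (hμ : Integrable (fun y : ℝ => y ^ 2) μ)
    (hν₁ : Integrable (fun y : ℝ => y ^ 2) ν₁) (hν₂ : Integrable (fun y : ℝ => y ^ 2) ν₂)
    (hmom : ∫ y, y ^ 2 ∂μ = (∫ y, y ^ 2 ∂ν₁) - ∫ y, y ^ 2 ∂ν₂) (ha : 0 ≤ a) :
    ∫ y in {y | a ≤ |y|}, y ^ 2 ∂μ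
      ≤ (∫ y in {y | a ≤ |y|}, y ^ 2 ∂ν₁) - (∫ y in {y | a ≤ |y|}, y ^ 2 ∂ν₂)
        + 4 * a ^ 2 * Δ := by
  have hwin := setIntegral_Ioo_sq_sub_le fun t ht =>
    measureReal_sqSuperlevelIoo_sub_le_four_mul hF hG hΔ ha ht.1.le ht.2
  linarith [setIntegral_tail_sub_eq_neg hμ hν₁ hν₂ hmom a]

theorem neg_le_setIntegral_tail (hF : ∀ x, F x = μ.real (Iic x))
    (hG : ∀ x, G x = ν₁.real (Iic x) - ν₂.real (Iic x)) (hΔ : ∀ x, |F x - G x| ≤ Δ)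
    (hμ : Integrable (fun y : ℝ => y ^ 2) μ)
    (hν₁ : Integrable (fun y : ℝ => y ^ 2) ν₁) (hν₂ : Integrable (fun y : ℝ => y ^ 2) ν₂)
    (hmom : ∫ y, y ^ 2 ∂μ = (∫ y, y ^ 2 ∂ν₁) - ∫ y, y ^ 2 ∂ν₂) (ha : 0 ≤ a) :
    -(3 * a ^ 2 * Δ + a ^ 2 * |G (-a)|)
      ≤ (∫ y in {y | a ≤ |y|}, y ^ 2 ∂ν₁) - ∫ y in {y | a ≤ |y|}, y ^ 2 ∂ν₂ := by
  have hwin := setIntegral_Ioo_sq_sub_le fun t ht =>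
    measureReal_sqSuperlevelIoo_sub_le hF hG hΔ ha ht.1.le ht.2
  have hμT : a ^ 2 * μ.real {y | a ≤ |y|} ≤ ∫ y in {y | a ≤ |y|}, y ^ 2 ∂μ :=
    mul_measureReal_le_setIntegral_sq hμ
      (measurableSet_le measurable_const continuous_abs.measurable) subset_rfl
      fun y (hy : a ≤ |y|) => by nlinarith [sq_abs y]
  linarith [setIntegral_tail_sub_eq_neg hμ hν₁ hν₂ hmom a]

theorem mul_abs_measureReal_sub_le_integral_sq (hν₁ : Integrable (fun y : ℝ => y ^ 2) ν₁)
    (hν₂ : Integrable (fun y : ℝ => y ^ 2) ν₂) {c : ℝ} {S : Set ℝ} (hS : MeasurableSet S)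
    (hc₀ : 0 ≤ c) (hc : ∀ y ∈ S, c ≤ y ^ 2) :
    c * |ν₁.real S - ν₂.real S| ≤ (∫ y, y ^ 2 ∂ν₁) + ∫ y, y ^ 2 ∂ν₂ :=
  calc c * |ν₁.real S - ν₂.real S| ≤ c * ν₁.real S + c * ν₂.real S := by
        rw [← mul_add]; exact mul_le_mul_of_nonneg_left (abs_measureReal_sub_le ν₁ ν₂ S) hc₀
    _ ≤ _ := by
      simpa using add_le_add (mul_measureReal_le_setIntegral_sq hν₁ hS (subset_univ S) hc)
        (mul_measureReal_le_setIntegral_sq hν₂ hS (subset_univ S) hc)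

theorem sq_mul_abs_one_sub_le_iSup (hν : ν₁.real univ - ν₂.real univ = 1)
    (hG : ∀ x, G x = ν₁.real (Iic x) - ν₂.real (Iic x))
    (hν₁ : Integrable (fun y : ℝ => y ^ 2) ν₁) (hν₂ : Integrable (fun y : ℝ => y ^ 2) ν₂)
    (ha : 0 ≤ a) {y : ℝ} (hy : a ≤ y) :
    y ^ 2 * |1 - G y| ≤ ⨆ z ∈ Ici a, z ^ 2 * |1 - G z| := by
  refine le_biSup_of_forall_le (f := fun z => z ^ 2 * |1 - G z|) (S := Ici a)
    (B := (∫ y, y ^ 2 ∂ν₁) + ∫ y, y ^ 2 ∂ν₂) (fun z (hz : a ≤ z) => ?_) hy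
  have hGc : 1 - G z = ν₁.real (Ioi z) - ν₂.real (Ioi z) := by
    rw [hG, ← hν, ← compl_Iic, measureReal_compl measurableSet_Iic,
      measureReal_compl measurableSet_Iic]
    ring
  rw [hGc]
  exact mul_abs_measureReal_sub_le_integral_sq hν₁ hν₂ measurableSet_Ioi (sq_nonneg z)
    fun w (hw : z < w) => by nlinarith

theorem sq_mul_abs_le_iSup (hG : ∀ x, G x = ν₁.real (Iic x) - ν₂.real (Iic x))
    (hν₁ : Integrable (fun y : ℝ => y ^ 2) ν₁) (hν₂ : Integrable (fun y : ℝ => y ^ 2) ν₂)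
    (ha : 0 ≤ a) {y : ℝ} (hy : y ≤ -a) :
    y ^ 2 * |G y| ≤ ⨆ z ∈ Iic (-a), z ^ 2 * |G z| := by
  refine le_biSup_of_forall_le (f := fun z => z ^ 2 * |G z|) (S := Iic (-a))
    (B := (∫ y, y ^ 2 ∂ν₁) + ∫ y, y ^ 2 ∂ν₂) (fun z (hz : z ≤ -a) => ?_) hy
  rw [hG]
  exact mul_abs_measureReal_sub_le_integral_sq hν₁ hν₂ measurableSet_Iic (sq_nonneg z)
    fun w (hw : w ≤ z) => by nlinarith

end SignedDifference

/-- **Lemma 3.1.** Let `F` be the distribution function of a probability measure `μ` on `ℝ`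
and let `G(x) = ν((-∞,x])` for a finite signed measure `ν = ν₁ - ν₂` with `ν(ℝ) = 1`.
If `F` and `G` have finite and equal second moments, then for every `a > 0`,
`sup_x [x²|F(x)-G(x)|] ≤ 4a²Δ + ∫_{|x|≥a} x² dν + max{sup_{x≥a} x²|1-G(x)|, sup_{x≤-a} x²|G(x)|}`,
where `Δ = sup_x |F(x)-G(x)|`. -/
theorem stmt_3
    (μ : Measure ℝ) [IsProbabilityMeasure μ]
    (ν₁ ν₂ : Measure ℝ) [IsFiniteMeasure ν₁] [IsFiniteMeasure ν₂]
    (hν : (ν₁ Set.univ).toReal - (ν₂ Set.univ).toReal = 1)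
    (F G : ℝ → ℝ)
    (hFdef : ∀ x, F x = (μ (Set.Iic x)).toReal)
    (hGdef : ∀ x, G x = (ν₁ (Set.Iic x)).toReal - (ν₂ (Set.Iic x)).toReal)
    (hμ2 : Integrable (fun x : ℝ => x ^ 2) μ)
    (hν₁2 : Integrable (fun x : ℝ => x ^ 2) ν₁)
    (hν₂2 : Integrable (fun x : ℝ => x ^ 2) ν₂)
    (hmom : ∫ x, x ^ 2 ∂μ = (∫ x, x ^ 2 ∂ν₁) - ∫ x, x ^ 2 ∂ν₂)
    (Δ : ℝ) (hΔ : Δ = ⨆ x : ℝ, |F x - G x|) :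
    ∀ a : ℝ, 0 < a →
      ∀ x : ℝ, x ^ 2 * |F x - G x| ≤
        4 * a ^ 2 * Δ
        + ((∫ y in {y : ℝ | a ≤ |y|}, y ^ 2 ∂ν₁) - ∫ y in {y : ℝ | a ≤ |y|}, y ^ 2 ∂ν₂)
        + max (⨆ y ∈ Set.Ici a, y ^ 2 * |1 - G y|)
            (⨆ y ∈ Set.Iic (-a), y ^ 2 * |G y|) := by
  intro a ha x
  have hΔx : ∀ x, |F x - G x| ≤ Δ := fun x => by
    rw [hΔ]; exact le_ciSup (bddAbove_range_abs_sub hFdef hGdef) x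
  have hupper := setIntegral_tail_le hFdef hGdef hΔx hμ2 hν₁2 hν₂2 hmom ha.le
  rcases le_or_gt a x with hax | hxa
  · linarith [sq_mul_abs_sub_le_of_le (G := G) hFdef hμ2 (ha.le.trans hax) hax,
      sq_mul_abs_one_sub_le_iSup hν hGdef hν₁2 hν₂2 ha.le hax, le_max_left
        (⨆ y ∈ Ici a, y ^ 2 * |1 - G y|) (⨆ y ∈ Iic (-a), y ^ 2 * |G y|)]
  rcases le_or_gt x (-a) with hxa' | hxa'
  · linarith [sq_mul_abs_sub_le_of_le_neg (G := G) hFdef hμ2 (by linarith) hxa',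
      sq_mul_abs_le_iSup hGdef hν₁2 hν₂2 ha.le hxa', le_max_right
        (⨆ y ∈ Ici a, y ^ 2 * |1 - G y|) (⨆ y ∈ Iic (-a), y ^ 2 * |G y|)]
  have hmid : x ^ 2 * |F x - G x| ≤ a ^ 2 * Δ :=
    mul_le_mul (sq_le_sq' hxa'.le hxa.le) (hΔx x) (abs_nonneg _) (sq_nonneg a)
  have hGa := sq_mul_abs_le_iSup hGdef hν₁2 hν₂2 ha.le le_rfl
  rw [neg_sq] at hGa
  linarith [neg_le_setIntegral_tail hFdef hGdef hΔx hμ2 hν₁2 hν₂2 hmom ha.le, le_max_right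
    (⨆ y ∈ Ici a, y ^ 2 * |1 - G y|) (⨆ y ∈ Iic (-a), y ^ 2 * |G y|)]
end

section
/- Suppose F and G have finite and equal second moments, i.e. ∫ x² dF(x) = ∫ x² dν(x) < ∞, and that for some constants A, B > 0 one has |G(x)| ≤ A e^{−x²/B} for all x ≤ 0 and |1 − G(x)| ≤ A e^{−x²/B} for all x ≥ 0. If Δ > 0, then sup_x [x² |F(x) − G(x)|] ≤ 13 A B Δ log(e + 1/Δ). -/
/-!
Let `W(t) = 1 - F(t) + F(-t)` be the two-sided tail of `μ` and `W_ν(t) = 1 - G(t) + G(-t)` that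
of `ν`. By the layer-cake formula both second moments equal `∫₀^∞ 2t W(t) dt`, so their equality,
`|W - W_ν| ≤ 2Δ` on `[0, T]` and the Gaussian decay `|W_ν(t)| ≤ 2A e^{-t²/B}` beyond `T` give
`∫_T^∞ 2t W ≤ 2ΔT² + 2AB e^{-T²/B}`. As `W` is antitone, `x² W(x) ≤ T² W(T) + ∫_T^∞ 2t W` for
`x ≥ T`. With `T² = B log(e + 1/Δ)` we get `e^{-T²/B} ≤ Δ`; for `|x| ≤ T` the trivial bound
`x²Δ` suffices, and for `|x| > T` the tail of `F` is controlled as above and that of `G` by its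
Gaussian decay.
-/

open MeasureTheory Set Filter Real Topology

lemma sq_mul_exp_neg_sq_div_le {B L y : ℝ} (hB : 0 < B) (hL : 1 ≤ L) (hy : B * L ≤ y ^ 2) :
    y ^ 2 * exp (-y ^ 2 / B) ≤ B * L * exp (-L) := by
  set s := y ^ 2 / B
  have hs : L ≤ s := (le_div_iff₀' hB).2 hy
  -- `s / L ≤ 1 + (s - L) ≤ exp (s - L)` since `L ≥ 1`
  have key : s ≤ L * exp (s - L) := by nlinarith [add_one_le_exp (s - L)]
  calc y ^ 2 * exp (-y ^ 2 / B) = B * (s * exp (-s)) := by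
        simp only [s, neg_div]; field_simp
    _ ≤ B * (L * exp (s - L) * exp (-s)) := by gcongr
    _ = B * L * exp (-L) := by rw [mul_assoc L, ← exp_add]; ring_nf

lemma one_le_two_mul_of_abs_le {a A : ℝ} (h₀ : |a| ≤ A) (h₁ : |1 - a| ≤ A) : 1 ≤ 2 * A := by
  linarith [abs_add_le a (1 - a), show |a + (1 - a)| = 1 by norm_num]

lemma one_le_log_exp_one_add {u : ℝ} (hu : 0 ≤ u) : 1 ≤ log (exp 1 + u) := by
  rw [le_log_iff_exp_le (by positivity)]; linarith

lemma exp_neg_log_exp_one_add_one_div_le {Δ : ℝ} (hΔ : 0 < Δ) :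
    exp (-log (exp 1 + 1 / Δ)) ≤ Δ := by
  rw [exp_neg, exp_log (by positivity), inv_le_comm₀ (by positivity) hΔ, ← one_div]
  linarith [exp_pos 1]

lemma integrable_two_mul_exp_neg_sq_div {B : ℝ} (hB : 0 < B) :
    Integrable fun t : ℝ => 2 * t * exp (-t ^ 2 / B) := by
  convert (integrable_mul_exp_neg_mul_sq (inv_pos.2 hB)).const_mul 2 using 2 with t
  ring_nf

lemma integral_Ioi_two_mul_exp_neg_sq_div {B : ℝ} (hB : 0 < B) (T : ℝ) :
    ∫ t in Ioi T, 2 * t * exp (-t ^ 2 / B) = B * exp (-T ^ 2 / B) := by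
  have hderiv : ∀ t ∈ Ici T, HasDerivAt (fun t => -B * exp (-t ^ 2 / B))
      (2 * t * exp (-t ^ 2 / B)) t := fun t _ => by
    have h : HasDerivAt (fun t => -t ^ 2 / B) (-(2 * t) / B) t := by
      simpa using (hasDerivAt_pow 2 t).neg.div_const B
    exact (h.exp.const_mul (-B)).congr_deriv (by field_simp)
  have hlim : Tendsto (fun t => -B * exp (-t ^ 2 / B)) atTop (𝓝 0) := by
    have : Tendsto (fun t : ℝ => -t ^ 2 / B) atTop atBot := by
      simpa only [neg_div, Function.comp_def] using
        tendsto_neg_atTop_atBot.comp ((tendsto_pow_atTop two_ne_zero).atTop_div_const hB)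
    simpa using (tendsto_exp_atBot.comp this).const_mul (-B)
  rw [integral_Ioi_of_hasDerivAt_of_tendsto' hderiv
    (integrable_two_mul_exp_neg_sq_div hB).integrableOn hlim]
  ring

lemma integral_Ioc_two_mul {a b : ℝ} (hab : a ≤ b) : ∫ t in Ioc a b, 2 * t = b ^ 2 - a ^ 2 := by
  rw [← intervalIntegral.integral_of_le hab, intervalIntegral.integral_const_mul, integral_id]
  ring

lemma sq_mul_le_sq_mul_add_integral_Ioi {v : ℝ → ℝ} {T x : ℝ} (hT : 0 ≤ T) (hTx : T ≤ x)
    (hv : Antitone v) (hv0 : ∀ t, 0 ≤ v t) (hint : IntegrableOn (fun t => 2 * t * v t) (Ioi T)) :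
    x ^ 2 * v x ≤ T ^ 2 * v T + ∫ t in Ioi T, 2 * t * v t := by
  have hmid : ∫ t in Ioc T x, 2 * t * v x ≤ ∫ t in Ioc T x, 2 * t * v t :=
    setIntegral_mono_on ((continuous_const_mul 2).mul continuous_const).integrableOn_Ioc
      (hint.mono_set Ioc_subset_Ioi_self) measurableSet_Ioc fun t ht =>
        mul_le_mul_of_nonneg_left (hv ht.2) (by linarith [ht.1])
  have htail : ∫ t in Ioc T x, 2 * t * v t ≤ ∫ t in Ioi T, 2 * t * v t :=
    setIntegral_mono_set hint ((ae_restrict_iff' measurableSet_Ioi).2 <| .of_forall fun t ht =>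
      mul_nonneg (by linarith [mem_Ioi.1 ht]) (hv0 t)) Ioc_subset_Ioi_self.eventuallyLE
  rw [integral_mul_const, integral_Ioc_two_mul hTx] at hmid
  nlinarith [hv hTx, sq_nonneg T]

lemma integral_Ioi_le_of_integral_Ioi_zero_eq {v w : ℝ → ℝ} {T B δ c : ℝ} (hT : 0 ≤ T)
    (hB : 0 < B) (hv : IntegrableOn (fun t => 2 * t * v t) (Ioi 0))
    (hw : IntegrableOn (fun t => 2 * t * w t) (Ioi 0))
    (heq : ∫ t in Ioi 0, 2 * t * v t = ∫ t in Ioi 0, 2 * t * w t)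
    (hnear : ∀ t ∈ Ioc 0 T, |v t - w t| ≤ δ)
    (hfar : ∀ t ∈ Ioi T, |w t| ≤ c * exp (-t ^ 2 / B)) :
    ∫ t in Ioi T, 2 * t * v t ≤ δ * T ^ 2 + c * (B * exp (-T ^ 2 / B)) := by
  have split : ∀ f : ℝ → ℝ, IntegrableOn f (Ioi 0) →
      ∫ t in Ioi 0, f t = (∫ t in Ioc 0 T, f t) + ∫ t in Ioi T, f t := fun f hf => by
    rw [← Ioc_union_Ioi_eq_Ioi hT]
    exact setIntegral_union (Ioc_disjoint_Ioi le_rfl) measurableSet_Ioi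
      (hf.mono_set Ioc_subset_Ioi_self) (hf.mono_set (Ioi_subset_Ioi hT))
  have hnear' : ∫ t in Ioc 0 T, (2 * t * w t - 2 * t * v t) ≤ ∫ t in Ioc 0 T, δ * (2 * t) :=
    setIntegral_mono_on ((hw.sub hv).mono_set Ioc_subset_Ioi_self)
      (continuous_const.mul (continuous_const_mul 2)).integrableOn_Ioc
      measurableSet_Ioc fun t ht => by
        have := (abs_sub_comm (w t) (v t)).trans_le (hnear t ht)
        nlinarith [le_abs_self (w t - v t), ht.1]
  have hfar' : ∫ t in Ioi T, 2 * t * w t ≤ ∫ t in Ioi T, c * (2 * t * exp (-t ^ 2 / B)) :=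
    setIntegral_mono_on (hw.mono_set (Ioi_subset_Ioi hT))
      ((integrable_two_mul_exp_neg_sq_div hB).const_mul c).integrableOn measurableSet_Ioi
      fun t ht => by
        have ht0 : 0 ≤ 2 * t := by linarith [mem_Ioi.1 ht]
        nlinarith [le_abs_self (w t), hfar t ht]
  rw [integral_sub (hw.mono_set Ioc_subset_Ioi_self) (hv.mono_set Ioc_subset_Ioi_self),
    integral_const_mul, integral_Ioc_two_mul hT] at hnear'
  rw [integral_const_mul, integral_Ioi_two_mul_exp_neg_sq_div hB] at hfar'
  linarith [split _ hv, split _ hw]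

lemma sq_mul_le_of_integral_Ioi_zero_eq {v w : ℝ → ℝ} {T B δ c x : ℝ} (hT : 0 ≤ T)
    (hB : 0 < B) (hv : Antitone v) (hv0 : ∀ t, 0 ≤ v t)
    (hvi : IntegrableOn (fun t => 2 * t * v t) (Ioi 0))
    (hwi : IntegrableOn (fun t => 2 * t * w t) (Ioi 0))
    (heq : ∫ t in Ioi 0, 2 * t * v t = ∫ t in Ioi 0, 2 * t * w t)
    (hnear : ∀ t ∈ Icc 0 T, |v t - w t| ≤ δ)
    (hfar : ∀ t ∈ Ici T, |w t| ≤ c * exp (-t ^ 2 / B)) (hTx : T ≤ x) :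
    x ^ 2 * v x ≤ 2 * δ * T ^ 2 + c * (T ^ 2 + B) * exp (-T ^ 2 / B) := by
  have hpoint := sq_mul_le_sq_mul_add_integral_Ioi hT hTx hv hv0
    (hvi.mono_set (Ioi_subset_Ioi hT))
  have hint := integral_Ioi_le_of_integral_Ioi_zero_eq hT hB hvi hwi heq
    (fun t ht => hnear t (Ioc_subset_Icc_self ht)) (fun t ht => hfar t (Ioi_subset_Ici_self ht))
  have hvT : v T ≤ δ + c * exp (-T ^ 2 / B) := by
    linarith [le_abs_self (v T - w T), le_abs_self (w T), hnear T ⟨hT, le_rfl⟩,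
      hfar T self_mem_Ici]
  nlinarith [mul_le_mul_of_nonneg_left hvT (sq_nonneg T)]

lemma integral_sq_eq_integral_Ioi_meas_lt {α : Type*} [MeasurableSpace α] {ρ : Measure α}
    [IsFiniteMeasure ρ] {f : α → ℝ} (hf : AEMeasurable f ρ) (hf0 : 0 ≤ᵐ[ρ] f)
    (hf2 : Integrable (fun a => f a ^ 2) ρ) :
    IntegrableOn (fun t => 2 * t * ρ.real {a | t < f a}) (Ioi 0) ∧
      ∫ a, f a ^ 2 ∂ρ = ∫ t in Ioi 0, 2 * t * ρ.real {a | t < f a} := by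
  have hpos : ∀ᵐ t ∂volume.restrict (Ioi 0), 0 ≤ 2 * t * ρ.real {a | t < f a} :=
    (ae_restrict_iff' measurableSet_Ioi).2 <| .of_forall fun t ht =>
      mul_nonneg (by linarith [mem_Ioi.1 ht]) measureReal_nonneg
  have hmeas : AEStronglyMeasurable (fun t => 2 * t * ρ.real {a | t < f a})
      (volume.restrict (Ioi 0)) :=
    ((continuous_const.mul continuous_id).measurable.mul
      (Antitone.measurable (f := fun t => ρ.real {a | t < f a}) fun s t hst =>
        measureReal_mono fun a (ha : t < f a) => hst.trans_lt ha)).aestronglyMeasurable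
  have layercake := lintegral_comp_eq_lintegral_meas_lt_mul ρ hf0 hf (g := fun t => 2 * t)
    (fun t _ => (continuous_const_mul 2).intervalIntegrable 0 t)
    ((ae_restrict_iff' measurableSet_Ioi).2 <| .of_forall fun t ht =>
      (by linarith [mem_Ioi.1 ht] : (0:ℝ) ≤ 2 * t))
  have hsq : ∀ y : ℝ, ∫ t in (0:ℝ)..y, 2 * t = y ^ 2 := fun y => by
    rw [intervalIntegral.integral_const_mul, integral_id]; ring
  simp only [hsq] at layercake
  have hcongr : ∀ t ∈ Ioi (0:ℝ), ρ {a | t < f a} * ENNReal.ofReal (2 * t) =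
      ENNReal.ofReal (2 * t * ρ.real {a | t < f a}) := fun t ht => by
    rw [ENNReal.ofReal_mul (p := 2 * t) (by linarith [mem_Ioi.1 ht]), ofReal_measureReal, mul_comm]
  rw [setLIntegral_congr_fun measurableSet_Ioi hcongr] at layercake
  have hint : IntegrableOn (fun t => 2 * t * ρ.real {a | t < f a}) (Ioi 0) :=
    (lintegral_ofReal_ne_top_iff_integrable hmeas hpos).1 (layercake ▸ hf2.lintegral_lt_top.ne)
  refine ⟨hint, ?_⟩
  rw [integral_eq_lintegral_of_nonneg_ae (.of_forall fun a => sq_nonneg (f a))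
    hf2.aestronglyMeasurable, integral_eq_lintegral_of_nonneg_ae hpos hmeas, layercake]

def twoSidedTail (ρ : Measure ℝ) (t : ℝ) : ℝ := ρ.real (Ioi t) + ρ.real (Iic (-t))

lemma twoSidedTail_nonneg (ρ : Measure ℝ) (t : ℝ) : 0 ≤ twoSidedTail ρ t :=
  add_nonneg measureReal_nonneg measureReal_nonneg

lemma antitone_twoSidedTail (ρ : Measure ℝ) [IsFiniteMeasure ρ] : Antitone (twoSidedTail ρ) :=
  fun _ _ hst => add_le_add (measureReal_mono (Ioi_subset_Ioi hst))
    (measureReal_mono (Iic_subset_Iic.2 (neg_le_neg hst)))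

lemma twoSidedTail_eq (ρ : Measure ℝ) [IsFiniteMeasure ρ] (t : ℝ) :
    twoSidedTail ρ t = ρ.real univ - ρ.real (Iic t) + ρ.real (Iic (-t)) := by
  rw [twoSidedTail, ← compl_Iic, measureReal_compl measurableSet_Iic]

lemma integral_sq_eq_integral_Ioi_twoSidedTail (ρ : Measure ℝ) [IsFiniteMeasure ρ]
    (h2 : Integrable (fun y => y ^ 2) ρ) :
    IntegrableOn (fun t => 2 * t * twoSidedTail ρ t) (Ioi 0) ∧
      ∫ y, y ^ 2 ∂ρ = ∫ t in Ioi 0, 2 * t * twoSidedTail ρ t := by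
  obtain ⟨hint, heq⟩ := integral_sq_eq_integral_Ioi_meas_lt (ρ := ρ) (f := fun y => |y|)
    continuous_abs.aemeasurable (.of_forall fun y => abs_nonneg y) (by simpa only [sq_abs] using h2)
  have hsplit : ∀ t : ℝ, 0 ≤ t →
      ρ.real {y | t < |y|} = ρ.real (Ioi t) + ρ.real {y | t < -y} := fun t ht => by
    have hdisj : Disjoint (Ioi t) {y | t < -y} :=
      disjoint_left.2 fun y (h₁ : t < y) (h₂ : t < -y) => by linarith
    rw [← measureReal_union hdisj (measurableSet_lt measurable_const measurable_neg)]
    congr 1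
    ext y
    simp only [mem_ofPred_eq, lt_abs, mem_union, mem_Ioi]
  -- `{y | t ≤ -y} = Iic (-t)` and `{y | t < -y}` have the same measure for a.e. `t`
  have hae : (fun t => 2 * t * ρ.real {y | t < |y|}) =ᵐ[volume.restrict (Ioi 0)]
      fun t => 2 * t * twoSidedTail ρ t := by
    filter_upwards [meas_le_ae_eq_meas_lt ρ (volume.restrict (Ioi 0)) (fun y => -y),
      ae_restrict_mem measurableSet_Ioi] with t ht ht0
    have hIic : {y : ℝ | t ≤ -y} = Iic (-t) := by ext y; simp only [mem_ofPred_eq, mem_Iic, le_neg]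
    rw [hsplit t (le_of_lt ht0), twoSidedTail, ← hIic, measureReal_def ρ {y | t ≤ -y}, ht]
    rfl
  simp only [sq_abs] at heq
  exact ⟨hint.congr hae, heq.trans (integral_congr_ae hae)⟩

lemma sq_mul_tail_le {μ ν₁ ν₂ : Measure ℝ} [IsProbabilityMeasure μ] [IsFiniteMeasure ν₁]
    [IsFiniteMeasure ν₂] (hν : ν₁.real univ - ν₂.real univ = 1) {F G : ℝ → ℝ}
    (hF : ∀ x, F x = μ.real (Iic x)) (hG : ∀ x, G x = ν₁.real (Iic x) - ν₂.real (Iic x))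
    (hμ2 : Integrable (fun y => y ^ 2) μ) (hν₁2 : Integrable (fun y => y ^ 2) ν₁)
    (hν₂2 : Integrable (fun y => y ^ 2) ν₂)
    (hmom : ∫ y, y ^ 2 ∂μ = (∫ y, y ^ 2 ∂ν₁) - ∫ y, y ^ 2 ∂ν₂)
    {Δ A B T x : ℝ} (hΔ : ∀ x, |F x - G x| ≤ Δ) (hB : 0 < B)
    (hGneg : ∀ x : ℝ, x ≤ 0 → |G x| ≤ A * exp (-x ^ 2 / B))
    (hGpos : ∀ x : ℝ, 0 ≤ x → |1 - G x| ≤ A * exp (-x ^ 2 / B)) (hT : 0 ≤ T) (hTx : T ≤ x) :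
    x ^ 2 * (1 - F x + F (-x)) ≤ 4 * Δ * T ^ 2 + 2 * A * (T ^ 2 + B) * exp (-T ^ 2 / B) := by
  have hWμ : ∀ t, twoSidedTail μ t = 1 - F t + F (-t) := fun t => by
    rw [twoSidedTail_eq, probReal_univ, hF, hF]
  have hWν : ∀ t, twoSidedTail ν₁ t - twoSidedTail ν₂ t = 1 - G t + G (-t) := fun t => by
    rw [twoSidedTail_eq, twoSidedTail_eq, hG, hG, ← hν]; ring
  obtain ⟨iμ, eμ⟩ := integral_sq_eq_integral_Ioi_twoSidedTail μ hμ2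
  obtain ⟨i₁, e₁⟩ := integral_sq_eq_integral_Ioi_twoSidedTail ν₁ hν₁2
  obtain ⟨i₂, e₂⟩ := integral_sq_eq_integral_Ioi_twoSidedTail ν₂ hν₂2
  rw [← hWμ]
  refine le_of_le_of_eq (sq_mul_le_of_integral_Ioi_zero_eq (δ := 2 * Δ) (c := 2 * A)
    (w := fun t => twoSidedTail ν₁ t - twoSidedTail ν₂ t) hT hB (antitone_twoSidedTail μ)
    (twoSidedTail_nonneg μ) iμ ?_ ?_ (fun t _ => ?_) (fun t ht => ?_) hTx) (by ring)
  · simp only [mul_sub]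
    exact i₁.sub i₂
  · simp only [mul_sub]
    rw [integral_sub i₁ i₂, ← eμ, ← e₁, ← e₂, hmom]
  · rw [hWμ, hWν, show 1 - F t + F (-t) - (1 - G t + G (-t)) =
      (F (-t) - G (-t)) - (F t - G t) by ring]
    linarith [abs_sub (F (-t) - G (-t)) (F t - G t), hΔ t, hΔ (-t)]
  · rw [hWν]
    have h1 := hGpos t (hT.trans ht)
    have h2 := hGneg (-t) (by linarith [hT.trans ht])
    rw [neg_sq] at h2
    linarith [abs_add_le (1 - G t) (G (-t))]

lemma abs_measureReal_sub_sub_le {α : Type*} [MeasurableSpace α] (μ ν₁ ν₂ : Measure α)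
    [IsFiniteMeasure μ] [IsFiniteMeasure ν₁] [IsFiniteMeasure ν₂] (s : Set α) :
    |μ.real s - (ν₁.real s - ν₂.real s)| ≤ μ.real univ + ν₁.real univ + ν₂.real univ := by
  rw [abs_le]
  constructor <;> linarith [measureReal_mono (μ := μ) (subset_univ s),
    measureReal_mono (μ := ν₁) (subset_univ s), measureReal_mono (μ := ν₂) (subset_univ s),
    measureReal_nonneg (μ := μ) (s := s), measureReal_nonneg (μ := ν₁) (s := s),
    measureReal_nonneg (μ := ν₂) (s := s)]

lemma sq_mul_abs_sub_le_max {F G g : ℝ → ℝ} {Δ T τ ε : ℝ} (hF0 : ∀ x, 0 ≤ F x)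
    (hF1 : ∀ x, F x ≤ 1) (hΔ : ∀ x, |F x - G x| ≤ Δ)
    (hGneg : ∀ x : ℝ, x ≤ 0 → |G x| ≤ g x) (hGpos : ∀ x : ℝ, 0 ≤ x → |1 - G x| ≤ g x)
    (hF : ∀ x, T ≤ x → x ^ 2 * (1 - F x + F (-x)) ≤ τ) (hg : ∀ x, T ≤ |x| → x ^ 2 * g x ≤ ε)
    (x : ℝ) : x ^ 2 * |F x - G x| ≤ max (T ^ 2 * Δ) (τ + ε) := by
  rcases le_or_gt |x| T with hx | hx
  · have hx2 : x ^ 2 ≤ T ^ 2 := sq_le_sq' (abs_le.1 hx).1 (abs_le.1 hx).2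
    exact le_max_of_le_left <| mul_le_mul hx2 (hΔ x) (abs_nonneg _) ((sq_nonneg x).trans hx2)
  refine le_max_of_le_right ?_
  rcases le_or_gt 0 x with h0 | h0
  · rw [abs_of_nonneg h0] at hx
    have habs : |F x - G x| ≤ (1 - F x + F (-x)) + g x := by
      have := abs_sub_le (F x) 1 (G x)
      rw [abs_sub_comm (F x) 1, abs_of_nonneg (sub_nonneg.2 (hF1 x))] at this
      linarith [hF0 (-x), hGpos x h0]
    nlinarith [hF x hx.le, hg x (by rw [abs_of_nonneg h0]; exact hx.le), sq_nonneg x]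
  · rw [abs_of_neg h0] at hx
    have habs : |F x - G x| ≤ (1 - F (-x) + F (-(-x))) + g x := by
      rw [neg_neg]
      linarith [abs_sub (F x) (G x), abs_of_nonneg (hF0 x), hF1 (-x), hGneg x h0.le]
    have := hF (-x) hx.le
    rw [neg_sq] at this
    nlinarith [hg x (by rw [abs_of_neg h0]; exact hx.le), sq_nonneg x]

/-- **Proposition 3.2.** If `F` and `G = ν((-∞,·])` have finite and equal second moments and
`|G(x)| ≤ A e^{-x²/B}` for `x ≤ 0`, `|1-G(x)| ≤ A e^{-x²/B}` for `x ≥ 0` (with `A, B > 0`),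
then `sup_x [x²|F(x)-G(x)|] ≤ 13·A·B·Δ·log(e + 1/Δ)`, provided `Δ > 0`. -/
theorem stmt_5
    (μ : Measure ℝ) [IsProbabilityMeasure μ]
    (ν₁ ν₂ : Measure ℝ) [IsFiniteMeasure ν₁] [IsFiniteMeasure ν₂]
    (hν : (ν₁ Set.univ).toReal - (ν₂ Set.univ).toReal = 1)
    (F G : ℝ → ℝ)
    (hFdef : ∀ x, F x = (μ (Set.Iic x)).toReal)
    (hGdef : ∀ x, G x = (ν₁ (Set.Iic x)).toReal - (ν₂ (Set.Iic x)).toReal)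
    (hμ2 : Integrable (fun x : ℝ => x ^ 2) μ)
    (hν₁2 : Integrable (fun x : ℝ => x ^ 2) ν₁)
    (hν₂2 : Integrable (fun x : ℝ => x ^ 2) ν₂)
    (hmom : ∫ x, x ^ 2 ∂μ = (∫ x, x ^ 2 ∂ν₁) - ∫ x, x ^ 2 ∂ν₂)
    (Δ : ℝ) (hΔ : Δ = ⨆ x : ℝ, |F x - G x|) (hΔpos : 0 < Δ)
    (A B : ℝ) (hA : 0 < A) (hB : 0 < B)
    (hGneg : ∀ x : ℝ, x ≤ 0 → |G x| ≤ A * Real.exp (-x ^ 2 / B))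
    (hGpos : ∀ x : ℝ, 0 ≤ x → |1 - G x| ≤ A * Real.exp (-x ^ 2 / B)) :
    ∀ x : ℝ, x ^ 2 * |F x - G x| ≤
      13 * A * B * Δ * Real.log (Real.exp 1 + 1 / Δ) := by
  have hΔle : ∀ x, |F x - G x| ≤ Δ := fun x => hΔ ▸ le_ciSup (f := fun x => |F x - G x|) ⟨_, by
    rintro _ ⟨y, rfl⟩
    simp only [hFdef, hGdef]
    exact abs_measureReal_sub_sub_le μ ν₁ ν₂ (Iic y)⟩ x
  have hA2 : 1 ≤ 2 * A :=
    one_le_two_mul_of_abs_le (by simpa using hGneg 0 le_rfl) (by simpa using hGpos 0 le_rfl)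
  set L := log (exp 1 + 1 / Δ)
  have hL : 1 ≤ L := one_le_log_exp_one_add (by positivity)
  have hLΔ : exp (-L) ≤ Δ := exp_neg_log_exp_one_add_one_div_le hΔpos
  have hT : √(B * L) ^ 2 = B * L := sq_sqrt (by positivity)
  refine fun x => (sq_mul_abs_sub_le_max (T := √(B * L)) (τ := 12 * A * B * Δ * L)
    (ε := A * B * Δ * L) (fun x => hFdef x ▸ measureReal_nonneg)
    (fun x => hFdef x ▸ measureReal_le_one) hΔle hGneg hGpos (fun y hy => ?_) (fun y hy => ?_)
    x).trans (max_le ?_ ?_)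
  · refine (sq_mul_tail_le hν hFdef hGdef hμ2 hν₁2 hν₂2 hmom hΔle hB hGneg hGpos
      (sqrt_nonneg _) hy).trans ?_
    rw [hT, show -(B * L) / B = -L by field_simp]
    linarith [mul_le_mul_of_nonneg_left hLΔ (by positivity : 0 ≤ 2 * A * (B * L + B)),
      mul_le_mul_of_nonneg_left hL (by positivity : 0 ≤ A * B * Δ),
      mul_le_mul_of_nonneg_left hA2 (by positivity : 0 ≤ Δ * B * L)]
  · have hy2 : B * L ≤ y ^ 2 := (sqrt_le_sqrt_iff (sq_nonneg y)).1 (by rwa [sqrt_sq_eq_abs])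
    linarith [mul_le_mul_of_nonneg_left (sq_mul_exp_neg_sq_div_le hB hL hy2) hA.le,
      mul_le_mul_of_nonneg_left hLΔ (by positivity : 0 ≤ A * B * L)]
  · rw [hT]
    linarith [mul_le_mul_of_nonneg_left hA2 (by positivity : 0 ≤ B * L * Δ),
      (by positivity : 0 ≤ A * B * Δ * L)]
  · linarith
end

section
/- Suppose F and G have finite and equal second moments, i.e. ∫ x² dF(x) = ∫ x² dν(x) < ∞, and that the signed measure ν is supported on the interval [−a, a] for some a > 0. Then the Fourier–Stieltjes transforms f(t) = ∫ e^{itx} dF(x) and g(t) = ∫ e^{itx} dν(x) satisfy |f(t) − g(t)| ≤ 4π a Δ |t| for all t ∈ ℝ. -/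
/-!
For a finite measure `ρ` on `ℝ` let `T_ρ(u) = ρ(ℝ) 𝟙[u ≥ 0] - ρ((-∞, u])`, i.e. `ρ((u, ∞))` for
`u ≥ 0` and `-ρ((-∞, u])` for `u < 0`. Fubini, applied to
`(x, u) ↦ (𝟙[0 ≤ u < x] - 𝟙[x ≤ u < 0]) Φ'(u)`, gives the integration by parts formula
`∫ (Φ(x) - Φ(0)) dρ(x) = ∫ T_ρ(u) Φ'(u) du`. Since `μ` and `ν = ν₁ - ν₂` have the same mass,
`W = T_μ - T_ν₁ + T_ν₂` equals `G - F`, so `|W| ≤ Δ`.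

With `Φ(x) = x²` the equal second moments give `∫ W(u) u du = 0`, and with `Φ(x) = e^{itx}` the
equal masses give `f(t) - g(t) = ∫ W(u) it e^{itu} du`, so `|f(t) - g(t)| ≤ |t| ∫ |W|`. On `[-a, a]`
we have `∫ |W| ≤ 2aΔ`. Outside, `ν₁ = ν₂`, so `W = T_μ` and `W(u) u ≥ 0`; hence
`a ∫_{|u|>a} |W| ≤ ∫_{|u|>a} W(u) u = -∫_{|u|≤a} W(u) u ≤ 2a²Δ`. Altogether
`|f(t) - g(t)| ≤ 4aΔ|t| ≤ 4πaΔ|t|`.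
-/

open MeasureTheory Set Complex

noncomputable def orientedIcoIndicator (x u : ℝ) : ℝ :=
  (Ico 0 x).indicator 1 u - (Ico x 0).indicator 1 u

noncomputable def signedTail (ρ : Measure ℝ) (u : ℝ) : ℝ :=
  if 0 ≤ u then ρ.real (Ioi u) else -ρ.real (Iic u)

section SignedTail

variable (ρ : Measure ℝ)

lemma signedTail_eq [IsFiniteMeasure ρ] (u : ℝ) :
    signedTail ρ u = (if 0 ≤ u then ρ.real univ else 0) - ρ.real (Iic u) := by
  unfold signedTail
  split_ifs
  · rw [← compl_Iic, measureReal_compl measurableSet_Iic]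
  · ring

lemma measurable_signedTail [IsFiniteMeasure ρ] : Measurable (signedTail ρ) := by
  have hcdf : Monotone fun u => ρ.real (Iic u) := fun _ _ h => measureReal_mono (Iic_subset_Iic.2 h)
  rw [funext (signedTail_eq ρ)]
  exact (Measurable.ite measurableSet_Ici measurable_const measurable_const).sub hcdf.measurable

lemma abs_signedTail_le [IsFiniteMeasure ρ] (u : ℝ) : |signedTail ρ u| ≤ ρ.real univ := by
  unfold signedTail
  split_ifs <;> simpa [abs_of_nonneg measureReal_nonneg] using measureReal_mono (subset_univ _)

lemma signedTail_mul_self_nonneg (u : ℝ) : 0 ≤ signedTail ρ u * u := by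
  unfold signedTail
  split_ifs with hu
  · exact mul_nonneg measureReal_nonneg hu
  · exact mul_nonneg_of_nonpos_of_nonpos (neg_nonpos.2 measureReal_nonneg) (by linarith)

lemma signedTail_eq_of_restrict_compl_Icc_eq {ρ₁ ρ₂ : Measure ℝ} {a u : ℝ}
    (h : ρ₁.restrict (Icc (-a) a)ᶜ = ρ₂.restrict (Icc (-a) a)ᶜ) (hu : a < |u|) :
    signedTail ρ₁ u = signedTail ρ₂ u := by
  have heq : ∀ s ⊆ (Icc (-a) a)ᶜ, ρ₁.real s = ρ₂.real s := fun s hs => by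
    rw [Measure.real, Measure.real, ← Measure.restrict_eq_self ρ₁ hs, h,
      Measure.restrict_eq_self ρ₂ hs]
  unfold signedTail
  split_ifs with h0
  · rw [abs_of_nonneg h0] at hu
    exact heq _ fun y hy => by simp only [mem_compl_iff, mem_Icc, mem_Ioi] at hy ⊢; intro; linarith
  · rw [abs_of_neg (not_le.1 h0)] at hu
    rw [heq _ fun y hy => by simp only [mem_compl_iff, mem_Icc, mem_Iic] at hy ⊢; intro; linarith]

end SignedTail

section OrientedIcoIndicator

variable {E : Type*} [NormedAddCommGroup E] {φ : ℝ → E}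

lemma MeasureTheory.LocallyIntegrable.integrable_indicator_Ico (hφ : LocallyIntegrable φ)
    (a b : ℝ) : Integrable ((Ico a b).indicator φ) :=
  ((hφ.integrableOn_isCompact isCompact_Icc).mono_set Ico_subset_Icc_self).integrable_indicator
    measurableSet_Ico

variable [NormedSpace ℝ E]

lemma measurable_orientedIcoIndicator :
    Measurable fun p : ℝ × ℝ => orientedIcoIndicator p.1 p.2 := by
  have hIco : ∀ f g : ℝ × ℝ → ℝ, Measurable f → Measurable g →
      MeasurableSet {p | p.2 ∈ Ico (f p) (g p)} := fun f g hf hg =>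
    (measurableSet_le hf measurable_snd).inter (measurableSet_lt measurable_snd hg)
  exact (measurable_one.indicator (hIco _ _ measurable_const measurable_fst)).sub
    (measurable_one.indicator (hIco _ _ measurable_fst measurable_const))

lemma orientedIcoIndicator_smul (x : ℝ) (φ : ℝ → E) :
    (fun u => orientedIcoIndicator x u • φ u) = (Ico 0 x).indicator φ - (Ico x 0).indicator φ := by
  ext u
  simp only [orientedIcoIndicator, sub_smul, ← indicator_smul_apply_left, Pi.one_apply, one_smul,
    Pi.sub_apply]

lemma integrable_orientedIcoIndicator_smul (hφ : LocallyIntegrable φ) (x : ℝ) :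
    Integrable fun u => orientedIcoIndicator x u • φ u := by
  rw [orientedIcoIndicator_smul]
  exact (hφ.integrable_indicator_Ico 0 x).sub (hφ.integrable_indicator_Ico x 0)

lemma integral_orientedIcoIndicator_smul [CompleteSpace E] (hφ : LocallyIntegrable φ) (x : ℝ) :
    ∫ u, orientedIcoIndicator x u • φ u = ∫ u in 0..x, φ u := by
  rw [orientedIcoIndicator_smul, integral_sub' (hφ.integrable_indicator_Ico 0 x)
    (hφ.integrable_indicator_Ico x 0), integral_indicator measurableSet_Ico,
    integral_indicator measurableSet_Ico, integral_Ico_eq_integral_Ioc,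
    integral_Ico_eq_integral_Ioc]
  rfl

lemma integral_norm_orientedIcoIndicator_smul [CompleteSpace E] (hφ : LocallyIntegrable φ)
    (x : ℝ) : ∫ u, ‖orientedIcoIndicator x u • φ u‖ = |∫ u in 0..x, ‖φ u‖| := by
  have hφn : LocallyIntegrable fun u => ‖φ u‖ :=
    hφ.mono hφ.aestronglyMeasurable.norm (ae_of_all _ fun u => (norm_norm _).le)
  have hnorm : ∀ u, ‖orientedIcoIndicator x u • φ u‖ = |orientedIcoIndicator x u| • ‖φ u‖ :=
    fun u => by rw [norm_smul, Real.norm_eq_abs, smul_eq_mul]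
  simp only [hnorm]
  rcases le_or_gt 0 x with hx | hx
  · have hk : ∀ u, |orientedIcoIndicator x u| = orientedIcoIndicator x u := fun u =>
      abs_of_nonneg <| by
        simp [orientedIcoIndicator, Ico_eq_empty (not_lt.2 hx), indicator_nonneg]
    simp only [hk]
    rw [integral_orientedIcoIndicator_smul hφn,
      abs_of_nonneg (intervalIntegral.integral_nonneg hx fun u _ => norm_nonneg (φ u))]
  · have hk : ∀ u, |orientedIcoIndicator x u| = -orientedIcoIndicator x u := fun u =>
      abs_of_nonpos <| by
        simp [orientedIcoIndicator, Ico_eq_empty (not_lt.2 hx.le), indicator_nonneg]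
    simp only [hk, neg_smul, integral_neg, integral_orientedIcoIndicator_smul hφn,
      intervalIntegral.integral_symm x 0, abs_neg, neg_neg]
    rw [abs_of_nonneg (intervalIntegral.integral_nonneg hx.le fun u _ => norm_nonneg (φ u))]

lemma integral_orientedIcoIndicator_left (ρ : Measure ℝ) (u : ℝ) :
    ∫ x, orientedIcoIndicator x u ∂ρ = signedTail ρ u := by
  unfold signedTail
  split_ifs with hu
  · have hk : ∀ x, orientedIcoIndicator x u = (Ioi u).indicator 1 x := fun x => by
      simp [orientedIcoIndicator, indicator_apply, hu, not_lt.2 hu]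
    simp only [hk, integral_indicator_one measurableSet_Ioi]
  · have hk : ∀ x, orientedIcoIndicator x u = -(Iic u).indicator 1 x := fun x => by
      simp [orientedIcoIndicator, indicator_apply, hu, not_le.1 hu]
    simp only [hk, integral_neg, integral_indicator_one measurableSet_Iic]

end OrientedIcoIndicator

section IntegrationByParts

variable {E : Type*} [NormedAddCommGroup E] [NormedSpace ℝ E] [CompleteSpace E] {φ : ℝ → E}
  (ρ : Measure ℝ)

lemma integrable_prod_orientedIcoIndicator_smul (hφ : LocallyIntegrable φ)
    (hρφ : Integrable (fun x => ∫ u in 0..x, ‖φ u‖) ρ) :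
    Integrable (Function.uncurry fun x u => orientedIcoIndicator x u • φ u) (ρ.prod volume) := by
  have hmeas : AEStronglyMeasurable (Function.uncurry fun x u => orientedIcoIndicator x u • φ u)
      (ρ.prod volume) :=
    measurable_orientedIcoIndicator.aestronglyMeasurable.smul hφ.aestronglyMeasurable.comp_snd
  refine (integrable_prod_iff hmeas).2
    ⟨ae_of_all _ (integrable_orientedIcoIndicator_smul hφ), ?_⟩
  simpa only [Function.uncurry_apply_pair, integral_norm_orientedIcoIndicator_smul hφ]
    using hρφ.abs

lemma integrable_signedTail_smul [SFinite ρ] (hφ : LocallyIntegrable φ)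
    (hρφ : Integrable (fun x => ∫ u in 0..x, ‖φ u‖) ρ) :
    Integrable fun u => signedTail ρ u • φ u := by
  simpa only [Function.uncurry_apply_pair, integral_smul_const,
    integral_orientedIcoIndicator_left] using
    (integrable_prod_orientedIcoIndicator_smul ρ hφ hρφ).integral_prod_right

theorem integral_intervalIntegral_eq_integral_signedTail_smul [SFinite ρ]
    (hφ : LocallyIntegrable φ) (hρφ : Integrable (fun x => ∫ u in 0..x, ‖φ u‖) ρ) :
    ∫ x, (∫ u in 0..x, φ u) ∂ρ = ∫ u, signedTail ρ u • φ u := by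
  simp only [← integral_orientedIcoIndicator_smul hφ]
  rw [integral_integral_swap (integrable_prod_orientedIcoIndicator_smul ρ hφ hρφ)]
  simp only [integral_smul_const, integral_orientedIcoIndicator_left]

end IntegrationByParts

section SignedTailDiff

noncomputable def signedTailDiff (μ ν₁ ν₂ : Measure ℝ) (u : ℝ) : ℝ :=
  signedTail μ u - signedTail ν₁ u + signedTail ν₂ u

variable (μ ν₁ ν₂ : Measure ℝ)

lemma signedTailDiff_mul_self_nonneg {a u : ℝ}
    (h : ν₁.restrict (Icc (-a) a)ᶜ = ν₂.restrict (Icc (-a) a)ᶜ) (hu : a < |u|) :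
    0 ≤ signedTailDiff μ ν₁ ν₂ u * u := by
  simpa only [signedTailDiff, signedTail_eq_of_restrict_compl_Icc_eq h hu, sub_add_cancel]
    using signedTail_mul_self_nonneg μ u

variable [IsFiniteMeasure μ] [IsFiniteMeasure ν₁] [IsFiniteMeasure ν₂]

lemma measurable_signedTailDiff : Measurable (signedTailDiff μ ν₁ ν₂) :=
  ((measurable_signedTail μ).sub (measurable_signedTail ν₁)).add (measurable_signedTail ν₂)

lemma signedTailDiff_eq (hmass : μ.real univ = ν₁.real univ - ν₂.real univ) (u : ℝ) :
    signedTailDiff μ ν₁ ν₂ u = (ν₁.real (Iic u) - ν₂.real (Iic u)) - μ.real (Iic u) := by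
  simp only [signedTailDiff, signedTail_eq]
  split_ifs <;> linarith

lemma abs_signedTailDiff_le (u : ℝ) :
    |signedTailDiff μ ν₁ ν₂ u| ≤ μ.real univ + ν₁.real univ + ν₂.real univ :=
  (abs_add_le _ _).trans <| add_le_add ((abs_sub _ _).trans <|
    add_le_add (abs_signedTail_le μ u) (abs_signedTail_le ν₁ u)) (abs_signedTail_le ν₂ u)

variable {E : Type*} [NormedAddCommGroup E] [NormedSpace ℝ E] [CompleteSpace E] {φ : ℝ → E}

lemma integrable_signedTailDiff_smul (hφ : LocallyIntegrable φ)
    (hμ : Integrable (fun x => ∫ u in 0..x, ‖φ u‖) μ)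
    (hν₁ : Integrable (fun x => ∫ u in 0..x, ‖φ u‖) ν₁)
    (hν₂ : Integrable (fun x => ∫ u in 0..x, ‖φ u‖) ν₂) :
    Integrable fun u => signedTailDiff μ ν₁ ν₂ u • φ u := by
  simp only [signedTailDiff, add_smul, sub_smul]
  exact ((integrable_signedTail_smul μ hφ hμ).sub (integrable_signedTail_smul ν₁ hφ hν₁)).add
    (integrable_signedTail_smul ν₂ hφ hν₂)

theorem integral_intervalIntegral_eq_integral_signedTailDiff_smul (hφ : LocallyIntegrable φ)
    (hμ : Integrable (fun x => ∫ u in 0..x, ‖φ u‖) μ)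
    (hν₁ : Integrable (fun x => ∫ u in 0..x, ‖φ u‖) ν₁)
    (hν₂ : Integrable (fun x => ∫ u in 0..x, ‖φ u‖) ν₂) :
    ∫ x, (∫ u in 0..x, φ u) ∂μ - ∫ x, (∫ u in 0..x, φ u) ∂ν₁ + ∫ x, (∫ u in 0..x, φ u) ∂ν₂
      = ∫ u, signedTailDiff μ ν₁ ν₂ u • φ u := by
  simp only [signedTailDiff, add_smul, sub_smul]
  rw [integral_add (f := fun u => signedTail μ u • φ u - signedTail ν₁ u • φ u)
      ((integrable_signedTail_smul μ hφ hμ).sub (integrable_signedTail_smul ν₁ hφ hν₁))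
      (integrable_signedTail_smul ν₂ hφ hν₂),
    integral_sub (integrable_signedTail_smul μ hφ hμ) (integrable_signedTail_smul ν₁ hφ hν₁),
    integral_intervalIntegral_eq_integral_signedTail_smul μ hφ hμ,
    integral_intervalIntegral_eq_integral_signedTail_smul ν₁ hφ hν₁,
    integral_intervalIntegral_eq_integral_signedTail_smul ν₂ hφ hν₂]

end SignedTailDiff

section Moments

variable (ρ : Measure ℝ)

lemma integrable_id_of_integrable_sq [IsFiniteMeasure ρ] (h : Integrable (fun x => x ^ 2) ρ) :
    Integrable (fun x => x) ρ :=
  ((memLp_two_iff_integrable_sq aestronglyMeasurable_id).2 h).integrable one_le_two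

lemma integrable_intervalIntegral_norm_id (h : Integrable (fun x => x ^ 2) ρ) :
    Integrable (fun x => ∫ u in 0..x, ‖u‖) ρ := by
  refine h.mono' (intervalIntegral.continuous_primitive
    (fun a b => continuous_norm.intervalIntegrable a b) 0).aestronglyMeasurable
    (ae_of_all _ fun x => ?_)
  calc ‖∫ u in 0..x, ‖u‖‖ ≤ |x| * |x - 0| :=
        intervalIntegral.norm_integral_le_of_norm_le_const fun u hu => by
          simpa using abs_sub_left_of_mem_uIcc (uIoc_subset_uIcc hu)
    _ = x ^ 2 := by rw [sub_zero, abs_mul_abs_self, sq]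

lemma norm_cexp_I_mul_ofReal_mul (t u : ℝ) : ‖cexp (I * t * u)‖ = 1 := by
  rw [norm_exp]
  simp

lemma norm_deriv_cexp_I_mul (t u : ℝ) : ‖I * t * cexp (I * t * u)‖ = |t| := by
  rw [norm_mul, norm_cexp_I_mul_ofReal_mul]
  simp

lemma hasDerivAt_cexp_I_mul (t u : ℝ) :
    HasDerivAt (fun u : ℝ => cexp (I * t * u)) (I * t * cexp (I * t * u)) u := by
  simpa [mul_comm] using ((hasDerivAt_id u).ofReal_comp.const_mul (I * t)).cexp

lemma continuous_deriv_cexp_I_mul (t : ℝ) :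
    Continuous fun u : ℝ => I * t * cexp (I * t * u) := by
  fun_prop

lemma integrable_intervalIntegral_norm_deriv_cexp (t : ℝ) (h : Integrable (fun x => x) ρ) :
    Integrable (fun x => ∫ u in 0..x, ‖I * t * cexp (I * t * u)‖) ρ := by
  simp only [norm_deriv_cexp_I_mul, intervalIntegral.integral_const, sub_zero, smul_eq_mul]
  exact h.mul_const |t|

lemma integral_intervalIntegral_deriv_cexp [IsFiniteMeasure ρ] (t : ℝ) :
    ∫ x, (∫ u in 0..x, I * t * cexp (I * t * u)) ∂ρ = ∫ x, cexp (I * t * x) ∂ρ - ρ.real univ := by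
  have hexp : Integrable (fun x : ℝ => cexp (I * t * x)) ρ :=
    .of_bound (by fun_prop) 1 (ae_of_all _ fun x => (norm_cexp_I_mul_ofReal_mul t x).le)
  have hprimitive : ∀ x : ℝ, ∫ u in 0..x, I * t * cexp (I * t * u) = cexp (I * t * x) - 1 :=
    fun x => by
      rw [intervalIntegral.integral_eq_sub_of_hasDerivAt (fun u _ => hasDerivAt_cexp_I_mul t u)
        ((continuous_deriv_cexp_I_mul t).intervalIntegrable _ _)]
      simp
  simp only [hprimitive]
  rw [integral_sub hexp (integrable_const 1), integral_const, real_smul, mul_one]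

end Moments

section SignedTailDiffMoments

variable (μ ν₁ ν₂ : Measure ℝ) [IsFiniteMeasure μ] [IsFiniteMeasure ν₁] [IsFiniteMeasure ν₂]

lemma integrable_signedTailDiff_mul_id (hμ : Integrable (fun x => x ^ 2) μ)
    (hν₁ : Integrable (fun x => x ^ 2) ν₁) (hν₂ : Integrable (fun x => x ^ 2) ν₂) :
    Integrable fun u => signedTailDiff μ ν₁ ν₂ u * u :=
  integrable_signedTailDiff_smul μ ν₁ ν₂ continuous_id.locallyIntegrable
    (integrable_intervalIntegral_norm_id μ hμ) (integrable_intervalIntegral_norm_id ν₁ hν₁)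
    (integrable_intervalIntegral_norm_id ν₂ hν₂)

theorem integral_sq_sub_add_eq_two_mul_integral_signedTailDiff_mul
    (hμ : Integrable (fun x => x ^ 2) μ) (hν₁ : Integrable (fun x => x ^ 2) ν₁)
    (hν₂ : Integrable (fun x => x ^ 2) ν₂) :
    ∫ x, x ^ 2 ∂μ - ∫ x, x ^ 2 ∂ν₁ + ∫ x, x ^ 2 ∂ν₂
      = 2 * ∫ u, signedTailDiff μ ν₁ ν₂ u * u := by
  have hibp := integral_intervalIntegral_eq_integral_signedTailDiff_smul μ ν₁ ν₂
    continuous_id.locallyIntegrable (integrable_intervalIntegral_norm_id μ hμ)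
    (integrable_intervalIntegral_norm_id ν₁ hν₁) (integrable_intervalIntegral_norm_id ν₂ hν₂)
  simp only [integral_id, id, smul_eq_mul, zero_pow two_ne_zero, sub_zero, integral_div] at hibp
  linarith

theorem integral_cexp_sub_add_eq_integral_signedTailDiff_smul (t : ℝ)
    (hμ : Integrable (fun x => x) μ) (hν₁ : Integrable (fun x => x) ν₁)
    (hν₂ : Integrable (fun x => x) ν₂) :
    (∫ x, cexp (I * t * x) ∂μ - ∫ x, cexp (I * t * x) ∂ν₁ + ∫ x, cexp (I * t * x) ∂ν₂)
      - (μ.real univ - ν₁.real univ + ν₂.real univ : ℝ)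
      = ∫ u, signedTailDiff μ ν₁ ν₂ u • (I * t * cexp (I * t * u)) := by
  rw [← integral_intervalIntegral_eq_integral_signedTailDiff_smul μ ν₁ ν₂
    (continuous_deriv_cexp_I_mul t).locallyIntegrable
    (integrable_intervalIntegral_norm_deriv_cexp μ t hμ)
    (integrable_intervalIntegral_norm_deriv_cexp ν₁ t hν₁)
    (integrable_intervalIntegral_norm_deriv_cexp ν₂ t hν₂),
    integral_intervalIntegral_deriv_cexp, integral_intervalIntegral_deriv_cexp,
    integral_intervalIntegral_deriv_cexp]
  push_cast
  ring

end SignedTailDiffMoments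

theorem integral_abs_le_of_integral_mul_id_eq_zero {W : ℝ → ℝ} {a Δ : ℝ} (ha : 0 < a)
    (hWm : Measurable W) (hWΔ : ∀ u, |W u| ≤ Δ) (hsign : ∀ u, a < |u| → 0 ≤ W u * u)
    (hint : Integrable fun u => W u * u) (hzero : ∫ u, W u * u = 0) :
    ∫ u, |W u| ≤ 4 * a * Δ := by
  set s := Icc (-a) a
  have hs : MeasurableSet s := measurableSet_Icc
  have hsfin : volume s < ⊤ := measure_Icc_lt_top
  have hvol : volume.real s = 2 * a := by rw [Real.volume_real_Icc_of_le (by linarith)]; ring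
  have hout : ∀ u ∈ sᶜ, a * |W u| ≤ W u * u := fun u hu => by
    have hau : a < |u| := not_le.1 fun h => hu (abs_le.1 h)
    calc a * |W u| ≤ |u| * |W u| := by gcongr
      _ = W u * u := by rw [← abs_mul, mul_comm, abs_of_nonneg (hsign u hau)]
  have hint_in : IntegrableOn (fun u => |W u|) s :=
    Measure.integrableOn_of_bounded hsfin.ne hWm.abs.aestronglyMeasurable
      (M := Δ) (ae_of_all _ fun u => by simpa using hWΔ u)
  have hint_out : IntegrableOn (fun u => |W u|) sᶜ := by
    refine (hint.const_mul a⁻¹).integrableOn.mono' hWm.abs.aestronglyMeasurable.restrict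
      ((ae_restrict_iff' hs.compl).2 (ae_of_all _ fun u hu => ?_))
    rw [Real.norm_eq_abs, abs_abs, le_inv_mul_iff₀ ha]
    exact hout u hu
  have hmoment_in : |∫ u in s, W u * u| ≤ Δ * a * (2 * a) := by
    rw [← Real.norm_eq_abs, ← hvol]
    refine norm_setIntegral_le_of_norm_le_const hsfin (f := fun u => W u * u) fun u hu => ?_
    rw [Real.norm_eq_abs, abs_mul]
    exact mul_le_mul (hWΔ u) (abs_le.2 hu) (abs_nonneg u) ((abs_nonneg _).trans (hWΔ u))
  have hin : ∫ u in s, |W u| ≤ Δ * (2 * a) := by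
    rw [← hvol]
    have hnorm := norm_setIntegral_le_of_norm_le_const hsfin (f := fun u => |W u|)
      fun u _ => by simpa using hWΔ u
    exact (le_abs_self _).trans hnorm
  have hout_int : a * ∫ u in sᶜ, |W u| ≤ a * (2 * a * Δ) := by
    calc a * ∫ u in sᶜ, |W u| = ∫ u in sᶜ, a * |W u| := (integral_const_mul _ _).symm
      _ ≤ ∫ u in sᶜ, W u * u :=
          setIntegral_mono_on (hint_out.const_mul a) hint.integrableOn hs.compl hout
      _ = -∫ u in s, W u * u := by linarith [integral_add_compl hs hint]
      _ ≤ a * (2 * a * Δ) := by linarith [neg_le_abs (∫ u in s, W u * u)]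
  have hint_abs : Integrable fun u => |W u| := by
    simpa using hint_in.union hint_out
  rw [← integral_add_compl hs hint_abs]
  linarith [le_of_mul_le_mul_left hout_int ha]

/-- If `F` and `G = ν((-∞,·])` have finite and equal second moments and the signed measure
`ν = ν₁ - ν₂` is supported on `[-a,a]`, then the Fourier–Stieltjes transforms satisfy
`|f(t) - g(t)| ≤ 4π a Δ |t|` for all `t`, where `Δ = sup_x |F(x)-G(x)|`. -/
theorem stmt_8
    (μ : Measure ℝ) [IsProbabilityMeasure μ]
    (ν₁ ν₂ : Measure ℝ) [IsFiniteMeasure ν₁] [IsFiniteMeasure ν₂]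
    (hν : (ν₁ Set.univ).toReal - (ν₂ Set.univ).toReal = 1)
    (F G : ℝ → ℝ)
    (hFdef : ∀ x, F x = (μ (Set.Iic x)).toReal)
    (hGdef : ∀ x, G x = (ν₁ (Set.Iic x)).toReal - (ν₂ (Set.Iic x)).toReal)
    (hμ2 : Integrable (fun x : ℝ => x ^ 2) μ)
    (hν₁2 : Integrable (fun x : ℝ => x ^ 2) ν₁)
    (hν₂2 : Integrable (fun x : ℝ => x ^ 2) ν₂)
    (hmom : ∫ x, x ^ 2 ∂μ = (∫ x, x ^ 2 ∂ν₁) - ∫ x, x ^ 2 ∂ν₂)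
    (Δ : ℝ) (hΔ : Δ = ⨆ x : ℝ, |F x - G x|)
    (a : ℝ) (ha : 0 < a)
    (hsupp : ν₁.restrict (Set.Icc (-a) a)ᶜ = ν₂.restrict (Set.Icc (-a) a)ᶜ)
    (f g : ℝ → ℂ)
    (hfdef : ∀ t : ℝ, f t = ∫ x, Complex.exp (Complex.I * t * x) ∂μ)
    (hgdef : ∀ t : ℝ, g t
      = (∫ x, Complex.exp (Complex.I * t * x) ∂ν₁)
        - ∫ x, Complex.exp (Complex.I * t * x) ∂ν₂) :
    ∀ t : ℝ, ‖f t - g t‖ ≤ 4 * Real.pi * a * Δ * |t| := by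
  intro t
  set W := signedTailDiff μ ν₁ ν₂ with hW
  have hmass : μ.real univ = ν₁.real univ - ν₂.real univ := by rw [probReal_univ]; exact hν.symm
  have hWFG : ∀ u, |W u| = |F u - G u| := fun u => by
    rw [hW, signedTailDiff_eq μ ν₁ ν₂ hmass, hFdef, hGdef, abs_sub_comm]
    rfl
  have hWΔ : ∀ u, |W u| ≤ Δ := fun u => by
    rw [hΔ, hWFG]
    exact le_ciSup ⟨_, forall_mem_range.2 fun x => hWFG x ▸ abs_signedTailDiff_le μ ν₁ ν₂ x⟩ u
  have hmoment : ∫ u, W u * u = 0 := by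
    linarith [integral_sq_sub_add_eq_two_mul_integral_signedTailDiff_mul μ ν₁ ν₂ hμ2 hν₁2 hν₂2]
  have hfg : f t - g t = ∫ u, W u • (I * t * cexp (I * t * u)) := by
    rw [← integral_cexp_sub_add_eq_integral_signedTailDiff_smul μ ν₁ ν₂ t
      (integrable_id_of_integrable_sq μ hμ2) (integrable_id_of_integrable_sq ν₁ hν₁2)
      (integrable_id_of_integrable_sq ν₂ hν₂2), hfdef, hgdef, hmass]
    push_cast
    ring
  calc ‖f t - g t‖ ≤ ∫ u, ‖W u • (I * t * cexp (I * t * u))‖ :=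
        hfg ▸ norm_integral_le_integral_norm _
    _ = (∫ u, |W u|) * |t| := by
        simp only [norm_smul, norm_deriv_cexp_I_mul, Real.norm_eq_abs, integral_mul_const]
    _ ≤ 4 * a * Δ * |t| := by
        gcongr
        exact integral_abs_le_of_integral_mul_id_eq_zero ha (measurable_signedTailDiff μ ν₁ ν₂)
          hWΔ (fun u => signedTailDiff_mul_self_nonneg μ ν₁ ν₂ hsupp)
          (integrable_signedTailDiff_mul_id μ ν₁ ν₂ hμ2 hν₁2 hν₂2) hmoment
    _ ≤ 4 * Real.pi * a * Δ * |t| := by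
        have hΔ0 : 0 ≤ Δ := (abs_nonneg _).trans (hWΔ 0)
        gcongr
        linarith [Real.pi_gt_three]
end

section
/- Let α₁, …, α_m be real numbers and let ε : ℤ_{≥1} → (0, ∞) be such that max_{1 ≤ k ≤ m} ‖n α_k‖ ≥ ε(n) for all integers n ≥ 1. Then for all real t ≥ 1, ‖t‖² + ‖tα₁‖² + ⋯ + ‖tα_m‖² ≥ c² ε(n(t))², where c = 1/(1 + max_{1 ≤ k ≤ m} |α_k|) and n(t) denotes the integer closest to t (with n(t) = n when t = n + 1/2). -/
/-- `distInt x` is the distance from the real number `x` to the nearest integer,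
`‖x‖ = min_{n ∈ ℤ} |x - n|`. -/
noncomputable def distInt (x : ℝ) : ℝ := ⨅ n : ℤ, |x - n|

/-- `nearestInt t` is the integer closest to `t`, with `nearestInt t = n`
in case `t = n + 1/2`. -/
noncomputable def nearestInt (t : ℝ) : ℤ := ⌈t - 1 / 2⌉

lemma distInt_nonneg (x : ℝ) : 0 ≤ distInt x :=
  Real.iInf_nonneg fun _ => abs_nonneg _

lemma distInt_le (x : ℝ) (n : ℤ) : distInt x ≤ |x - n| :=
  ciInf_le ⟨0, by rintro y ⟨j, rfl⟩; exact abs_nonneg _⟩ n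

lemma nearest_le (t : ℝ) (j : ℤ) : |t - nearestInt t| ≤ |t - j| := by
  have h1 : t - 1/2 ≤ (nearestInt t : ℝ) := Int.le_ceil _
  have h2 : ((nearestInt t : ℤ) : ℝ) < t - 1/2 + 1 := Int.ceil_lt_add_one _
  have habs : |t - nearestInt t| ≤ 1/2 := by
    rw [abs_le]; constructor <;> linarith
  rcases lt_trichotomy j (nearestInt t) with h | h | h
  · have : (j : ℝ) ≤ (nearestInt t : ℝ) - 1 := by exact_mod_cast Int.le_sub_one_of_lt h
    have : 1/2 ≤ |t - j| := le_abs.2 (Or.inl (by linarith))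
    linarith
  · rw [h]
  · have : (nearestInt t : ℝ) + 1 ≤ (j : ℝ) := by exact_mod_cast h
    have : 1/2 ≤ |t - j| := le_abs.2 (Or.inr (by linarith))
    linarith

lemma nearest_le_distInt (t : ℝ) : |t - nearestInt t| ≤ distInt t :=
  le_ciInf (nearest_le t)

/-- **Lemma 6.1.** Given reals `α₁,…,α_m`, suppose `max_{k ≤ m} ‖nα_k‖ ≥ ε(n) > 0` for all
integers `n ≥ 1`. Then for all real `t ≥ 1`,
`‖t‖² + ‖tα₁‖² + ⋯ + ‖tα_m‖² ≥ c² ε(n(t))²`, where `c⁻¹ = 1 + max_k |α_k|`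
and `n(t)` is the integer nearest to `t`. -/
theorem stmt_12
    (m : ℕ) (hm : 0 < m) (α : Fin m → ℝ)
    (ε : ℕ → ℝ)
    (hεpos : ∀ n : ℕ, 1 ≤ n → 0 < ε n)
    (hεmax : ∀ n : ℕ, 1 ≤ n → ε n ≤ ⨆ k : Fin m, distInt ((n : ℝ) * α k)) :
    ∀ t : ℝ, 1 ≤ t →
      distInt t ^ 2 + ∑ k : Fin m, distInt (t * α k) ^ 2 ≥
        ((1 + ⨆ k : Fin m, |α k|)⁻¹) ^ 2 * ε (nearestInt t).toNat ^ 2 := by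
  intro t ht
  haveI : Nonempty (Fin m) := Fin.pos_iff_nonempty.mp hm
  set n : ℤ := nearestInt t with hn
  have hn1 : 1 ≤ n := by
    have : (0 : ℤ) < n := Int.ceil_pos.2 (by linarith : (0:ℝ) < t - 1/2)
    omega
  have hNn : ((n.toNat : ℕ) : ℝ) = (n : ℝ) := by
    exact_mod_cast Int.toNat_of_nonneg (by omega)
  have hN1 : 1 ≤ n.toNat := by omega
  have hεN := hεmax n.toNat hN1
  rw [hNn] at hεN
  obtain ⟨k₀, hk₀⟩ := exists_eq_ciSup_of_finite (f := fun k : Fin m => distInt ((n : ℝ) * α k))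
  set M : ℝ := ⨆ k : Fin m, |α k| with hM
  have hbdd : BddAbove (Set.range fun k : Fin m => |α k|) := Set.Finite.bddAbove (Set.finite_range _)
  have hMk : |α k₀| ≤ M := le_ciSup hbdd k₀
  have hM0 : 0 ≤ M := le_trans (abs_nonneg _) hMk
  set a : ℝ := distInt t with ha
  set b : ℝ := distInt (t * α k₀) with hb
  have ha0 : 0 ≤ a := distInt_nonneg t
  have hb0 : 0 ≤ b := distInt_nonneg _
  have hta : |t - n| ≤ a := nearest_le_distInt t
  -- key chain
  have key : ε n.toNat ≤ b + a * M := by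
    have h1 : ε n.toNat ≤ distInt ((n : ℝ) * α k₀) := by rw [hk₀]; exact hεN
    set j : ℤ := nearestInt (t * α k₀) with hj
    have h2 : distInt ((n : ℝ) * α k₀) ≤ |(n : ℝ) * α k₀ - j| := distInt_le _ j
    have h3 : |(n : ℝ) * α k₀ - j| ≤ |t * α k₀ - j| + |(n : ℝ) * α k₀ - t * α k₀| := by
      have := abs_sub_abs_le_abs_sub ((n : ℝ) * α k₀ - j) (t * α k₀ - j)
      calc |(n : ℝ) * α k₀ - j| = |(t * α k₀ - j) + ((n : ℝ) * α k₀ - t * α k₀)| := by ring_nf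
        _ ≤ |t * α k₀ - j| + |(n : ℝ) * α k₀ - t * α k₀| := abs_add_le _ _
    have h4 : |t * α k₀ - j| ≤ b := nearest_le_distInt (t * α k₀)
    have h5 : |(n : ℝ) * α k₀ - t * α k₀| = |t - n| * |α k₀| := by
      have e : (n : ℝ) * α k₀ - t * α k₀ = -((t - n) * α k₀) := by ring
      rw [e, abs_neg, abs_mul]
    have h6 : |t - n| * |α k₀| ≤ a * M :=
      mul_le_mul hta hMk (abs_nonneg _) ha0
    linarith
  have hε0 : 0 ≤ ε n.toNat := (hεpos _ hN1).le
  have hsum : b ^ 2 ≤ ∑ k : Fin m, distInt (t * α k) ^ 2 :=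
    Finset.single_le_sum (f := fun k : Fin m => distInt (t * α k) ^ 2)
      (fun k _ => sq_nonneg _) (Finset.mem_univ k₀)
  have hinv : (1 + M)⁻¹ ^ 2 * ε n.toNat ^ 2 ≤ a ^ 2 + b ^ 2 := by
    rw [inv_pow, inv_mul_le_iff₀ (by positivity)]
    have hsq : ε n.toNat ^ 2 ≤ (b + a * M) ^ 2 := by nlinarith [mul_le_mul key key hε0 (by positivity : (0:ℝ) ≤ b + a * M)]
    nlinarith [hsq, sq_nonneg a, sq_nonneg (M * b), mul_nonneg hM0 (mul_nonneg ha0 hb0),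
      mul_nonneg hM0 (sq_nonneg (a - b))]
  linarith
end
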